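/- arXiv:2110.05788 — 3 statements merged into one kernel-verified Lean document; each statement's English description precedes it below -/
import Mathlib

section
/- The intersection of a finite set of half-spaces of ℤ^N (each defined by an upper or lower bound on one coordinate) is a disjoint union of finitely many integral orthants. -/
open Pointwise

namespace PeiPaper

/-- Points of the face of the standard orthant spanned by the canonical basis vectors in `Y`. -/
def stdFace (N : ℕ) (Y : Finset (Fin N)) : Set (Fin N → ℤ) :=
  {v | (∀ i, 0 ≤ v i) ∧ ∀ i, i ∉ Y → v i = 0}

/-- Integral orthogonal matrix. -/
def IsOrthMat {N : ℕ} (A : Matrix (Fin N) (Fin N) ℤ) : Prop :=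
  A * A.transpose = 1

/-- `L` is an integral orthant of rank `k` in `ℤ^N`: an affine-orthogonal image of a
rank-`k` face of the standard orthant. -/
def IsOrthantOfRank {N : ℕ} (L : Set (Fin N → ℤ)) (k : ℕ) : Prop :=
  ∃ (a : Fin N → ℤ) (A : Matrix (Fin N) (Fin N) ℤ) (Y : Finset (Fin N)),
    IsOrthMat A ∧ Y.card = k ∧ L = (fun v => a + A.mulVec v) '' stdFace N Y

def IsOrthant {N : ℕ} (L : Set (Fin N → ℤ)) : Prop := ∃ k, IsOrthantOfRank L k

/-- `S` is orthohedral: a finite union of integral orthants. -/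
def IsOrthohedral {N : ℕ} (S : Set (Fin N → ℤ)) : Prop :=
  ∃ 𝓛 : Set (Set (Fin N → ℤ)), 𝓛.Finite ∧ (∀ L ∈ 𝓛, IsOrthant L) ∧ S = ⋃₀ 𝓛

/-- The rank of a set: the maximal rank of an orthant contained in it. -/
noncomputable def orthRank {N : ℕ} (S : Set (Fin N → ℤ)) : ℕ :=
  sSup {k | ∃ L, IsOrthantOfRank L k ∧ L ⊆ S}

/-- Commensurability: the intersection is nonempty and has the same rank as both sets. -/
def Commensurable {N : ℕ} (L L' : Set (Fin N → ℤ)) : Prop :=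
  (L ∩ L').Nonempty ∧ orthRank L = orthRank (L ∩ L') ∧ orthRank L' = orthRank (L ∩ L')

/-- The rank-`k` orthants contained in `S`. -/
def germSet {N : ℕ} (S : Set (Fin N → ℤ)) (k : ℕ) : Set (Set (Fin N → ℤ)) :=
  {L | IsOrthantOfRank L k ∧ L ⊆ S}

/-- The rank-`k` germs of `S`: commensurability classes of rank-`k` orthants of `S`. -/
def Germ {N : ℕ} (S : Set (Fin N → ℤ)) (k : ℕ) : Type _ :=
  Quot (fun L L' : germSet S k => Commensurable L.1 L'.1)

def germOf {N : ℕ} (S : Set (Fin N → ℤ)) (k : ℕ) (L : germSet S k) : Germ S k :=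
  Quot.mk _ L

/-- The number of rank-`k` germs of `S` (as a natural number; `0` if infinite). -/
noncomputable def heightAt {N : ℕ} (S : Set (Fin N → ℤ)) (k : ℕ) : ℕ :=
  Nat.card (Germ S k)

/-- The height of an orthohedral set: the number of germs of maximal rank. -/
noncomputable def height {N : ℕ} (S : Set (Fin N → ℤ)) : ℕ :=
  heightAt S (orthRank S)

/-- `f` is (the restriction of) an isometry of `ℤ^N` on `L`. -/
def IsometricOn {N : ℕ} (f : (Fin N → ℤ) → (Fin N → ℤ)) (L : Set (Fin N → ℤ)) : Prop :=
  ∃ (a : Fin N → ℤ) (A : Matrix (Fin N) (Fin N) ℤ),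
    IsOrthMat A ∧ ∀ x ∈ L, f x = a + A.mulVec x

/-- `f` is (the restriction of) a translation on `L`. -/
def TranslationOn {N : ℕ} (f : (Fin N → ℤ) → (Fin N → ℤ)) (L : Set (Fin N → ℤ)) : Prop :=
  ∃ a : Fin N → ℤ, ∀ x ∈ L, f x = a + x

/-- `f` is a piecewise-Euclidean-isometric map on `S`. -/
def IsPeiMapOn {N : ℕ} (S : Set (Fin N → ℤ)) (f : (Fin N → ℤ) → (Fin N → ℤ)) : Prop :=
  ∃ 𝓛 : Set (Set (Fin N → ℤ)), 𝓛.Finite ∧ (∀ L ∈ 𝓛, IsOrthant L) ∧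
    S = ⋃₀ 𝓛 ∧ 𝓛.PairwiseDisjoint id ∧ ∀ L ∈ 𝓛, IsometricOn f L

/-- `f` is a piecewise-Euclidean-translation map on `S`. -/
def IsPetMapOn {N : ℕ} (S : Set (Fin N → ℤ)) (f : (Fin N → ℤ) → (Fin N → ℤ)) : Prop :=
  ∃ 𝓛 : Set (Set (Fin N → ℤ)), 𝓛.Finite ∧ (∀ L ∈ 𝓛, IsOrthant L) ∧
    S = ⋃₀ 𝓛 ∧ 𝓛.PairwiseDisjoint id ∧ ∀ L ∈ 𝓛, TranslationOn f L

def IsPeiIso {N : ℕ} (S S' : Set (Fin N → ℤ)) (f : (Fin N → ℤ) → (Fin N → ℤ)) : Prop :=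
  IsPeiMapOn S f ∧ Set.InjOn f S ∧ f '' S = S'

def PeiIsomorphic {N : ℕ} (S S' : Set (Fin N → ℤ)) : Prop := ∃ f, IsPeiIso S S' f

def IsPetIso {N : ℕ} (S S' : Set (Fin N → ℤ)) (f : (Fin N → ℤ) → (Fin N → ℤ)) : Prop :=
  IsPetMapOn S f ∧ Set.InjOn f S ∧ f '' S = S'

def PetIsomorphic {N : ℕ} (S S' : Set (Fin N → ℤ)) : Prop := ∃ f, IsPetIso S S' f

/-- A pei-permutation of `S`: a permutation of `ℤ^N` supported on `S` which is pei on `S`. -/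
def IsPeiPerm {N : ℕ} (S : Set (Fin N → ℤ)) (g : Equiv.Perm (Fin N → ℤ)) : Prop :=
  IsPeiMapOn S ⇑g ∧ ∀ x ∉ S, g x = x

/-- The element `g` has rank at most `k`: it is supported on an orthohedral set of rank `≤ k`. -/
def rankLE {N : ℕ} (g : Equiv.Perm (Fin N → ℤ)) (k : ℕ) : Prop :=
  ∃ T : Set (Fin N → ℤ), IsOrthohedral T ∧ orthRank T ≤ k ∧ ∀ x ∉ T, g x = x

/-- `g` fixes every rank-`k` germ of `S`. -/
def FixesGerm {N : ℕ} (S : Set (Fin N → ℤ)) (k : ℕ) (g : Equiv.Perm (Fin N → ℤ)) : Prop :=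
  ∀ L, IsOrthantOfRank L k → L ⊆ S →
    ∃ L', IsOrthantOfRank L' k ∧ L' ⊆ L ∧ Commensurable L L' ∧
      IsometricOn (⇑g) L' ∧ Commensurable (⇑g '' L') L

/-- `g` fixes every rank-`k` germ of `S` and acts on its tangent coset by a translation. -/
def TranslatesGerm {N : ℕ} (S : Set (Fin N → ℤ)) (k : ℕ) (g : Equiv.Perm (Fin N → ℤ)) : Prop :=
  ∀ L, IsOrthantOfRank L k → L ⊆ S →
    ∃ L' a, IsOrthantOfRank L' k ∧ L' ⊆ L ∧ Commensurable L L' ∧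
      (∀ x ∈ L', g x = a + x) ∧ Commensurable (⇑g '' L') L

/-- `σ` is the map induced by `g` on the rank-`k` germs of `S`. -/
def InducesGermMap {N : ℕ} (S : Set (Fin N → ℤ)) (k : ℕ) (g : Equiv.Perm (Fin N → ℤ))
    (σ : Germ S k → Germ S k) : Prop :=
  ∀ L : germSet S k, ∃ (L'' : Set (Fin N → ℤ)) (M : germSet S k),
    IsOrthantOfRank L'' k ∧ L'' ⊆ L.1 ∧ Commensurable L.1 L'' ∧
    M.1 = ⇑g '' L'' ∧ σ (germOf S k L) = germOf S k M

/-- A finitary permutation which is even (has sign `1` on a finite invariant subset). -/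
def IsEvenFinitary {α : Type*} (σ : Equiv.Perm α) : Prop :=
  ∃ (F : Finset α) (σF : Equiv.Perm F),
    (∀ a ∉ F, σ a = a) ∧ (∀ a : F, σ (a : α) = (σF a : α)) ∧
    @Equiv.Perm.sign F (Classical.decEq _) inferInstance σF = 1

/-- `g` induces an even finitary permutation on the rank-`k` germs of `S`. -/
def IsEvenOnGerms {N : ℕ} (S : Set (Fin N → ℤ)) (k : ℕ) (g : Equiv.Perm (Fin N → ℤ)) : Prop :=
  ∃ σ : Equiv.Perm (Germ S k), InducesGermMap S k g ⇑σ ∧ IsEvenFinitary σ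

/-- Ordering of germs (of arbitrary ranks): `p ≤ q` if they have representatives `L ⊆ L'`. -/
def germLE {N : ℕ} (S : Set (Fin N → ℤ)) (p q : Σ k, Germ S k) : Prop :=
  ∃ (L : germSet S p.1) (L' : germSet S q.1),
    germOf S p.1 L = p.2 ∧ germOf S q.1 L' = q.2 ∧ L.1 ⊆ L'.1

/-- A maximal germ of `S`. -/
def IsMaxGerm {N : ℕ} (S : Set (Fin N → ℤ)) (p : Σ k, Germ S k) : Prop :=
  ∀ q, germLE S p q → germLE S q p

/-- A `0`-based orthant. -/
def IsBasedOrthant {N : ℕ} (L0 : Set (Fin N → ℤ)) : Prop :=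
  ∃ (A : Matrix (Fin N) (Fin N) ℤ) (Y : Finset (Fin N)),
    IsOrthMat A ∧ L0 = (fun v => A.mulVec v) '' stdFace N Y

/-- Two (oriented) parallel orthants. -/
def ParallelOrthants {N : ℕ} (L L' : Set (Fin N → ℤ)) : Prop :=
  ∃ a : Fin N → ℤ, L' = a +ᵥ L

/-- The indicator image `S_τ` of `S`: the union of the `0`-based parallel translates of
the orthants contained in `S`. -/
def indicatorImage {N : ℕ} (S : Set (Fin N → ℤ)) : Set (Fin N → ℤ) :=
  ⋃₀ {L0 | IsBasedOrthant L0 ∧ ∃ a : Fin N → ℤ, (a +ᵥ L0) ⊆ S}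

/-- The height function `h_S`: the number of maximal germs of `S` whose indicator is `L0`. -/
noncomputable def hFun {N : ℕ} (S : Set (Fin N → ℤ)) (L0 : Set (Fin N → ℤ)) : ℕ :=
  Nat.card {p : Σ k, Germ S k //
    IsMaxGerm S p ∧ ∃ L : germSet S p.1, germOf S p.1 L = p.2 ∧ ∃ a : Fin N → ℤ, L.1 = a +ᵥ L0}

/-- `S` is quasi-normal: the maximal based orthants of `S_τ` are exactly the support of `h_S`. -/
def QuasiNormal {N : ℕ} (S : Set (Fin N → ℤ)) : Prop :=
  ∀ L0 : Set (Fin N → ℤ),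
    (IsBasedOrthant L0 ∧ L0 ⊆ indicatorImage S ∧
      ∀ L1, IsBasedOrthant L1 → L1 ⊆ indicatorImage S → L0 ⊆ L1 → L1 ⊆ L0)
    ↔ (IsBasedOrthant L0 ∧ 0 < hFun S L0)

/-- The germ `q` of `S'` is the image of the germ `p` of `S` under the injective pei-map `f`. -/
def GermMapsTo {N : ℕ} (f : (Fin N → ℤ) → (Fin N → ℤ)) (S S' : Set (Fin N → ℤ))
    (p : Σ k, Germ S k) (q : Σ k, Germ S' k) : Prop :=
  p.1 = q.1 ∧ ∃ (L : germSet S p.1) (L'' : Set (Fin N → ℤ)) (M : germSet S' q.1),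
    germOf S p.1 L = p.2 ∧ IsOrthantOfRank L'' p.1 ∧ L'' ⊆ L.1 ∧ Commensurable L.1 L'' ∧
    M.1 = f '' L'' ∧ germOf S' q.1 M = q.2

/-- A stack of `h` parallel rank-`n` orthants. -/
def IsStack {N : ℕ} (S : Set (Fin N → ℤ)) (n h : ℕ) : Prop :=
  ∃ (L0 : Set (Fin N → ℤ)) (a : Fin h → (Fin N → ℤ)),
    IsOrthantOfRank L0 n ∧
    (Pairwise fun i j => Disjoint (a i +ᵥ L0) (a j +ᵥ L0)) ∧
    S = ⋃ i, a i +ᵥ L0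

/-- A coordinate half-space of `ℤ^N`. -/
def IsHalfSpace {N : ℕ} (H : Set (Fin N → ℤ)) : Prop :=
  ∃ (i : Fin N) (c : ℤ), H = {x | x i ≤ c} ∨ H = {x | c ≤ x i}

/-- The canonical embedding `ℤ^N → ℤ^{N+1}`. -/
def emb (N : ℕ) (x : Fin N → ℤ) : Fin (N + 1) → ℤ :=
  fun i => if h : (i : ℕ) < N then x ⟨i, h⟩ else 0

/-- The sum of all matrix entries of a finitely supported family of vectors. -/
noncomputable def totalSum (k : ℕ) (Γ : Type*) : (Γ →₀ (Fin k → ℤ)) →+ ℤ :=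
  Finsupp.liftAddHom (fun _ => ∑ i : Fin k, Pi.evalAddMonoidHom (fun _ => ℤ) i)

/-- The clique (flag) complex of a graph. -/
def cliqueComplex {V : Type*} (G : SimpleGraph V) : Set (Finset V) :=
  {s | s.Nonempty ∧ G.IsClique (s : Set V)}

/-- The geometric realization of a simplicial complex on vertex set `V`. -/
def realization {V : Type*} (K : Set (Finset V)) : Set (V → ℝ) :=
  {f | (∀ v, 0 ≤ f v) ∧ ∃ s ∈ K, Function.support f ⊆ ↑s ∧ ∑ v ∈ s, f v = 1}

/-- A wedge (bouquet) of `n`-spheres indexed by `ι`, with basepoint `b`. -/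
noncomputable def wedgeSpheres (ι : Type) (n : ℕ)
    (b : Metric.sphere (0 : EuclideanSpace ℝ (Fin (n + 1))) 1) : Type :=
  Quot (fun p q : Unit ⊕ (ι × Metric.sphere (0 : EuclideanSpace ℝ (Fin (n + 1))) 1) =>
    (Sum.elim (fun _ => True) (fun pr => pr.2 = b) p) ∧
    (Sum.elim (fun _ => True) (fun qr => qr.2 = b) q))

noncomputable instance (ι : Type) (n : ℕ) (b : Metric.sphere (0 : EuclideanSpace ℝ (Fin (n + 1))) 1) :
    TopologicalSpace (wedgeSpheres ι n b) :=
  letI : TopologicalSpace ι := ⊥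
  instTopologicalSpaceQuot


/-- Interpretation of a one-dimensional "piece": a point, an upward ray, or a downward ray. -/
def pieceSet (p : ℤ × Option Bool) : Set ℤ :=
  match p.2 with
  | none => {p.1}
  | some true => Set.Ici p.1
  | some false => Set.Iic p.1

lemma piece_decomp (J : Set ℤ) (hne : J.Nonempty)
    (hconv : ∀ t u s, t ∈ J → s ∈ J → t ≤ u → u ≤ s → u ∈ J) :
    ∃ P : Finset (ℤ × Option Bool), (J = ⋃ p ∈ P, pieceSet p) ∧
      (∀ p ∈ P, ∀ q ∈ P, p ≠ q → Disjoint (pieceSet p) (pieceSet q)) := by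
  by_cases hb : ∃ b : ℤ, ∀ z ∈ J, b ≤ z
  · obtain ⟨lo, hlo, hlo'⟩ := Int.exists_least_of_bdd (P := fun z => z ∈ J)
      (by obtain ⟨b, hb⟩ := hb; exact ⟨b, hb⟩) hne
    by_cases ha : ∃ b : ℤ, ∀ z ∈ J, z ≤ b
    · obtain ⟨hi, hhi, hhi'⟩ := Int.exists_greatest_of_bdd (P := fun z => z ∈ J)
        (by obtain ⟨b, hb⟩ := ha; exact ⟨b, hb⟩) hne
      refine ⟨(Finset.Icc lo hi).image (fun c => (c, none)), ?_, ?_⟩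
      · ext t
        simp only [Set.mem_iUnion, Finset.mem_image, Finset.mem_Icc, exists_prop]
        constructor
        · intro ht
          exact ⟨(t, none), ⟨t, ⟨hlo' t ht, hhi' t ht⟩, rfl⟩, rfl⟩
        · rintro ⟨p, ⟨c, ⟨h1, h2⟩, rfl⟩, ht⟩
          have htc : t = c := ht
          subst htc
          exact hconv lo t hi hlo hhi h1 h2
      · rintro p hp q hq hpq
        simp only [Finset.mem_image, Finset.mem_Icc] at hp hq
        obtain ⟨c, -, rfl⟩ := hp
        obtain ⟨c', -, rfl⟩ := hq
        have hcc : c ≠ c' := by simpa using hpq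
        simp only [pieceSet]
        exact Set.disjoint_singleton.2 hcc
    · refine ⟨{(lo, some true)}, ?_, by simp⟩
      ext t
      simp only [Set.mem_iUnion, Finset.mem_singleton, exists_prop]
      constructor
      · intro ht
        exact ⟨(lo, some true), rfl, hlo' t ht⟩
      · rintro ⟨p, rfl, ht⟩
        have ht' : lo ≤ t := ht
        push_neg at ha
        obtain ⟨s, hs, hts⟩ := ha t
        exact hconv lo t s hlo hs ht' hts.le
  · push_neg at hb
    by_cases ha : ∃ b : ℤ, ∀ z ∈ J, z ≤ b
    · obtain ⟨hi, hhi, hhi'⟩ := Int.exists_greatest_of_bdd (P := fun z => z ∈ J)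
        (by obtain ⟨b, hb⟩ := ha; exact ⟨b, hb⟩) hne
      refine ⟨{(hi, some false)}, ?_, by simp⟩
      ext t
      simp only [Set.mem_iUnion, Finset.mem_singleton, exists_prop]
      constructor
      · intro ht
        exact ⟨(hi, some false), rfl, hhi' t ht⟩
      · rintro ⟨p, rfl, ht⟩
        have ht' : t ≤ hi := ht
        obtain ⟨z, hz, hzt⟩ := hb t
        exact hconv z t hi hz hhi hzt.le ht'
    · push_neg at ha
      refine ⟨{(0, some true), (-1, some false)}, ?_, ?_⟩
      · ext t
        simp only [Set.mem_iUnion, Finset.mem_insert, Finset.mem_singleton, exists_prop]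
        constructor
        · intro _
          rcases le_or_gt 0 t with h | h
          · exact ⟨(0, some true), Or.inl rfl, h⟩
          · exact ⟨(-1, some false), Or.inr rfl, show t ≤ -1 by omega⟩
        · rintro ⟨p, hp, ht⟩
          obtain ⟨z, hz, hzt⟩ := hb t
          obtain ⟨s, hs, hts⟩ := ha t
          exact hconv z t s hz hs hzt.le hts.le
      · rintro p hp q hq hpq
        simp only [Finset.mem_insert, Finset.mem_singleton] at hp hq
        have key : Disjoint (pieceSet (0, some true)) (pieceSet (-1, some false)) := by
          rw [Set.disjoint_left]
          intro a ha1 ha2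
          have h1 : (0:ℤ) ≤ a := ha1
          have h2 : a ≤ -1 := ha2
          omega
        rcases hp with rfl | rfl <;> rcases hq with rfl | rfl
        · exact absurd rfl hpq
        · exact key
        · exact key.symm
        · exact absurd rfl hpq

lemma isOrthant_piece {N : ℕ} (p : Fin N → ℤ × Option Bool) :
    IsOrthant {x : Fin N → ℤ | ∀ i, x i ∈ pieceSet (p i)} := by
  classical
  set d : Fin N → ℤ := fun i => if (p i).2 = some false then -1 else 1 with hd
  have hdd : ∀ i, d i * d i = 1 := by
    intro i; simp only [hd]; split <;> norm_num
  refine ⟨(Finset.univ.filter (fun i => (p i).2.isSome)).card,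
    (fun i => (p i).1), Matrix.diagonal d, Finset.univ.filter (fun i => (p i).2.isSome),
    ?_, rfl, ?_⟩
  · unfold IsOrthMat
    have h2 : (fun i => d i * d i) = (1 : Fin N → ℤ) := funext fun i => hdd i
    rw [Matrix.diagonal_transpose, Matrix.diagonal_mul_diagonal, h2]
    exact Matrix.diagonal_one
  · ext x
    simp only [Set.mem_setOf_eq, Set.mem_image]
    constructor
    · intro hx
      refine ⟨fun i => d i * (x i - (p i).1), ⟨?_, ?_⟩, ?_⟩
      · intro i
        have hxi := hx i
        rcases hpi : (p i).2 with _ | b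
        · have : x i = (p i).1 := by simpa [pieceSet, hpi] using hxi
          simp [this]
        · cases b
          · have h1 : x i ≤ (p i).1 := by simpa [pieceSet, hpi] using hxi
            have hd1 : d i = -1 := by simp [hd, hpi]
            show 0 ≤ d i * (x i - (p i).1)
            rw [hd1]; omega
          · have h1 : (p i).1 ≤ x i := by simpa [pieceSet, hpi] using hxi
            have hd1 : d i = 1 := by simp [hd, hpi]
            show 0 ≤ d i * (x i - (p i).1)
            rw [hd1]; omega
      · intro i hi
        simp only [Finset.mem_filter, Finset.mem_univ, true_and] at hi
        have h2 : (p i).2 = none := Option.not_isSome_iff_eq_none.1 hi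
        have : x i = (p i).1 := by simpa [pieceSet, h2] using hx i
        simp [this]
      · funext i
        simp only [Pi.add_apply, Matrix.mulVec_diagonal]
        rw [← mul_assoc, hdd i, one_mul]
        ring
    · rintro ⟨v, ⟨hv0, hvY⟩, rfl⟩
      intro i
      simp only [Pi.add_apply, Matrix.mulVec_diagonal]
      rcases hpi : (p i).2 with _ | b
      · have hv : v i = 0 := hvY i (by simp [hpi])
        simp [pieceSet, hpi, hv]
      · cases b
        · have hd1 : d i = -1 := by simp [hd, hpi]
          have := hv0 i
          simp only [pieceSet, hpi, Set.mem_Iic, hd1]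
          omega
        · have hd1 : d i = 1 := by simp [hd, hpi]
          have := hv0 i
          simp only [pieceSet, hpi, Set.mem_Ici, hd1]
          omega

/-- The intersection of a finite set of coordinate half-spaces of `ℤ^N`
is a disjoint union of finitely many integral orthants. -/
theorem stmt0 {N : ℕ} (𝓗 : Set (Set (Fin N → ℤ))) (hfin : 𝓗.Finite)
    (hH : ∀ H ∈ 𝓗, IsHalfSpace H) :
    ∃ 𝓛 : Set (Set (Fin N → ℤ)), 𝓛.Finite ∧ (∀ L ∈ 𝓛, IsOrthant L) ∧
      𝓛.PairwiseDisjoint id ∧ ⋂₀ 𝓗 = ⋃₀ 𝓛 := by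
  classical
  by_cases hSne : (⋂₀ 𝓗).Nonempty
  case neg =>
    refine ⟨∅, Set.finite_empty, by simp, by simp, ?_⟩
    rw [Set.not_nonempty_iff_eq_empty] at hSne
    simp [hSne]
  case pos =>
  set S := ⋂₀ 𝓗 with hS
  set J : Fin N → Set ℤ := fun i => (fun x : Fin N → ℤ => x i) '' S with hJ
  have hJne : ∀ i, (J i).Nonempty := fun i => hSne.image _
  have hprod : ∀ x : Fin N → ℤ, x ∈ S ↔ ∀ i, x i ∈ J i := by
    intro x
    constructor
    · intro hx i; exact ⟨x, hx, rfl⟩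
    · intro hx
      intro H hHm
      obtain ⟨j, c, hc⟩ := hH H hHm
      obtain ⟨y, hy, hyj⟩ := hx j
      rcases hc with rfl | rfl
      · have hyc : y j ≤ c := hy _ hHm
        show x j ≤ c
        rw [← hyj]; exact hyc
      · have hyc : c ≤ y j := hy _ hHm
        show c ≤ x j
        rw [← hyj]; exact hyc
  have hconv : ∀ i, ∀ t u s, t ∈ J i → s ∈ J i → t ≤ u → u ≤ s → u ∈ J i := by
    rintro i t u s ⟨y, hy, rfl⟩ ⟨z, hz, rfl⟩ htu hus
    refine ⟨Function.update y i u, ?_, by simp⟩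
    intro H hHm
    obtain ⟨j, c, hc⟩ := hH H hHm
    by_cases hij : j = i
    · subst hij
      rcases hc with rfl | rfl
      · have hzc : z j ≤ c := hz _ hHm
        simp only [Set.mem_setOf_eq, Function.update_self]
        exact hus.trans hzc
      · have hyc : c ≤ y j := hy _ hHm
        simp only [Set.mem_setOf_eq, Function.update_self]
        exact hyc.trans htu
    · have hy' := hy _ hHm
      rcases hc with rfl | rfl <;>
        simpa only [Set.mem_setOf_eq, Function.update_of_ne hij] using hy'
  choose P hPunion hPdisj using fun i => piece_decomp (J i) (hJne i) (hconv i)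
  refine ⟨(fun p : Fin N → ℤ × Option Bool => {x | ∀ i, x i ∈ pieceSet (p i)}) ''
      ↑(Fintype.piFinset P),
    ((Fintype.piFinset P).finite_toSet).image _, ?_, ?_, ?_⟩
  · rintro L ⟨p, -, rfl⟩
    exact isOrthant_piece p
  · rintro L1 ⟨p, hp, rfl⟩ L2 ⟨q, hq, rfl⟩ hne12
    simp only [Finset.mem_coe, Fintype.mem_piFinset] at hp hq
    rw [Function.onFun, Set.disjoint_left]
    intro x hx1 hx2
    apply hne12
    have hpq : p = q := by
      funext i
      by_contra hne'
      exact Set.disjoint_left.1 (hPdisj i _ (hp i) _ (hq i) hne') (hx1 i) (hx2 i)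
    simp [hpq]
  · ext x
    rw [hprod]
    constructor
    · intro hx
      have hex : ∀ i, ∃ p ∈ P i, x i ∈ pieceSet p := by
        intro i
        have := hx i
        rw [hPunion i] at this
        simpa using this
      choose p hp hxp using hex
      exact ⟨_, ⟨p, by simpa [Fintype.mem_piFinset] using hp, rfl⟩, hxp⟩
    · rintro ⟨L, ⟨q, hq, rfl⟩, hxL⟩ i
      rw [hPunion i]
      simp only [Finset.mem_coe, Fintype.mem_piFinset] at hq
      exact Set.mem_biUnion (hq i) (hxL i)


end PeiPaper
end

section
/- The collection of orthohedral subsets of ℤ^N is closed under finite intersections, finite unions, and complements. -/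
open Pointwise

namespace PeiPaper

/-!
An integral orthogonal matrix is a signed permutation matrix, so an integral orthant is exactly
a box `∏ⱼ Iⱼ` whose sides are rays `{c}`, `[c, ∞)` or `(-∞, c]` in `ℤ`. The intersection of two
such boxes is the box of the pairwise intersections of sides, and the complement of a box is
`⋃ⱼ {v | vⱼ ∉ Iⱼ}`; in both cases every side is a finite union of rays, and a box with such sides
distributes into finitely many orthants. Closure under intersection then follows by
distributivity, and closure under complement by De Morgan's law.
-/

open Set
open scoped Matrix

def IsRay (I : Set ℤ) : Prop := ∃ c : ℤ, I = {c} ∨ I = Ici c ∨ I = Iic c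

def IsRayUnion (K : Set ℤ) : Prop :=
  ∃ F : Set (Set ℤ), F.Finite ∧ (∀ J ∈ F, IsRay J) ∧ K = ⋃₀ F

lemma IsRay.isRayUnion {I : Set ℤ} (h : IsRay I) : IsRayUnion I :=
  ⟨{I}, finite_singleton I, by simpa using h, (sUnion_singleton I).symm⟩

lemma IsRayUnion.union {K K' : Set ℤ} (h : IsRayUnion K) (h' : IsRayUnion K') :
    IsRayUnion (K ∪ K') := by
  obtain ⟨F, hF, hFray, rfl⟩ := h
  obtain ⟨F', hF', hFray', rfl⟩ := h'
  exact ⟨F ∪ F', hF.union hF', fun J hJ => hJ.elim (hFray J) (hFray' J),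
    (sUnion_union F F').symm⟩

lemma isRayUnion_of_finite {K : Set ℤ} (h : K.Finite) : IsRayUnion K :=
  ⟨(fun c => {c}) '' K, h.image _, by rintro J ⟨c, -, rfl⟩; exact ⟨c, Or.inl rfl⟩,
    by simp⟩

lemma isRayUnion_univ : IsRayUnion univ := by
  rw [← Iic_union_Ici (a := (0 : ℤ))]
  exact (IsRay.isRayUnion ⟨0, by simp⟩).union (IsRay.isRayUnion ⟨0, by simp⟩)

lemma IsRay.isRayUnion_inter {I I' : Set ℤ} (h : IsRay I) (h' : IsRay I') :
    IsRayUnion (I ∩ I') := by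
  obtain ⟨c, rfl | rfl | rfl⟩ := h
  · exact isRayUnion_of_finite ((finite_singleton c).inter_of_left _)
  all_goals obtain ⟨c', rfl | rfl | rfl⟩ := h'
  · exact isRayUnion_of_finite ((finite_singleton c').inter_of_right _)
  · exact IsRay.isRayUnion ⟨max c c', by simp⟩
  · rw [Ici_inter_Iic]; exact isRayUnion_of_finite (finite_Icc c c')
  · exact isRayUnion_of_finite ((finite_singleton c').inter_of_right _)
  · rw [inter_comm, Ici_inter_Iic]; exact isRayUnion_of_finite (finite_Icc c' c)
  · exact IsRay.isRayUnion ⟨min c c', by simp⟩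

lemma IsRay.isRayUnion_compl {I : Set ℤ} (h : IsRay I) : IsRayUnion Iᶜ := by
  obtain ⟨c, rfl | rfl | rfl⟩ := h
  · have : ({c}ᶜ : Set ℤ) = Iic (c - 1) ∪ Ici (c + 1) := by ext; simp
    rw [this]
    exact (IsRay.isRayUnion ⟨c - 1, by simp⟩).union (IsRay.isRayUnion ⟨c + 1, by simp⟩)
  · exact IsRay.isRayUnion ⟨c - 1, Or.inr (Or.inr (by ext; simp))⟩
  · exact IsRay.isRayUnion ⟨c + 1, Or.inr (Or.inl (by ext; simp))⟩

def stdRay : Bool → Set ℤ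
  | true => Ici 0
  | false => {0}

lemma isRay_iff_exists_affine {I : Set ℤ} :
    IsRay I ↔ ∃ (c ε : ℤ) (b : Bool), (ε = 1 ∨ ε = -1) ∧ I = (fun x => c + ε * x) '' stdRay b := by
  constructor
  · rintro ⟨c, rfl | rfl | rfl⟩
    · exact ⟨c, 1, false, Or.inl rfl, by simp [stdRay]⟩
    · exact ⟨c, 1, true, Or.inl rfl, by simp [stdRay]⟩
    · exact ⟨c, -1, true, Or.inr rfl, by simp [stdRay, ← sub_eq_add_neg]⟩
  · rintro ⟨c, ε, b, rfl | rfl, rfl⟩ <;> cases b <;>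
      exact ⟨c, by simp [stdRay, ← sub_eq_add_neg]⟩

lemma exists_eq_single_of_sum_mul_self_eq_one {ι : Type*} [Fintype ι] {f : ι → ℤ}
    (h : ∑ i, f i * f i = 1) : ∃ k, (f k = 1 ∨ f k = -1) ∧ ∀ m ≠ k, f m = 0 := by
  classical
  have one_le_sq {z : ℤ} (hz : z ≠ 0) : 1 ≤ z * z := by
    nlinarith [Int.one_le_abs hz, abs_mul_abs_self z]
  obtain ⟨k, hk⟩ : ∃ k, f k ≠ 0 := by
    by_contra! h0
    simp [h0] at h
  have hzero : ∀ m ≠ k, f m = 0 := by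
    intro m hm
    by_contra hfm
    have : f m * f m + f k * f k ≤ ∑ i, f i * f i := by
      rw [← Finset.sum_pair (f := fun i => f i * f i) hm]
      exact Finset.sum_le_sum_of_subset_of_nonneg (Finset.subset_univ _)
        fun i _ _ => mul_self_nonneg (f i)
    linarith [one_le_sq hfm, one_le_sq hk]
  rw [Finset.sum_eq_single k (fun m _ hm => by rw [hzero m hm, zero_mul])
    (fun h => absurd (Finset.mem_univ k) h)] at h
  exact ⟨k, mul_self_eq_one_iff.mp h, hzero⟩

lemma Matrix.exists_signed_perm_of_mul_transpose_eq_one {ι : Type*} [Fintype ι] [DecidableEq ι]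
    {A : Matrix ι ι ℤ} (hA : A * A.transpose = 1) :
    ∃ (σ : Equiv.Perm ι) (ε : ι → ℤ), (∀ i, ε i = 1 ∨ ε i = -1) ∧
      ∀ v, A *ᵥ v = fun i => ε i * v (σ i) := by
  have hrow (i j : ι) : ∑ k, A i k * A j k = (1 : Matrix ι ι ℤ) i j := by
    rw [← hA, Matrix.mul_apply]
    rfl
  choose π hπ hzero using fun i => exists_eq_single_of_sum_mul_self_eq_one
    ((hrow i i).trans (Matrix.one_apply_eq i))
  have hsum (i : ι) (g : ι → ℤ) : ∑ k, A i k * g k = A i (π i) * g (π i) :=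
    Finset.sum_eq_single (π i) (fun k _ hk => by rw [hzero i k hk, zero_mul])
      (fun h => absurd (Finset.mem_univ _) h)
  have hunit (i : ι) : A i (π i) ≠ 0 := by rcases hπ i with h | h <;> simp [h]
  have hπ_inj : Function.Injective π := by
    intro i j hij
    by_contra hne
    have := hrow i j
    rw [hsum, Matrix.one_apply_ne hne, hij] at this
    exact mul_ne_zero (hij ▸ hunit i) (hunit j) this
  refine ⟨Equiv.ofBijective π (Finite.injective_iff_bijective.mp hπ_inj), fun i => A i (π i), hπ,
    fun v => funext fun i => hsum i v⟩

lemma image_comp_perm_univ_pi {ι α : Type*} (σ : Equiv.Perm ι) (I : ι → Set α) :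
    (· ∘ σ) '' univ.pi I = univ.pi (I ∘ σ) := by
  ext w
  constructor
  · rintro ⟨v, hv, rfl⟩ i -
    exact hv (σ i) trivial
  · intro hw
    refine ⟨w ∘ σ.symm, fun j _ => by simpa using hw (σ.symm j) trivial, ?_⟩
    ext; simp

section Orthohedral

variable {N : ℕ}

lemma stdFace_eq_univ_pi (Y : Finset (Fin N)) :
    stdFace N Y = univ.pi fun j => stdRay (decide (j ∈ Y)) := by
  ext v
  simp only [stdFace, mem_univ_pi]
  refine ⟨fun ⟨hnonneg, hzero⟩ j => ?_, fun hv => ⟨fun j => ?_, fun j hj => ?_⟩⟩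
  · by_cases hj : j ∈ Y <;> simp [stdRay, hj, hnonneg j, hzero j]
  · by_cases hj : j ∈ Y <;> have := hv j <;> simp_all [stdRay]
  · simpa [stdRay, hj] using hv j

lemma isOrthant_iff {L : Set (Fin N → ℤ)} :
    IsOrthant L ↔ ∃ I : Fin N → Set ℤ, (∀ j, IsRay (I j)) ∧ L = univ.pi I := by
  constructor
  · rintro ⟨-, a, A, Y, hA, -, rfl⟩
    obtain ⟨σ, ε, hε, hmul⟩ := Matrix.exists_signed_perm_of_mul_transpose_eq_one hA
    refine ⟨fun i => (fun x => a i + ε i * x) '' stdRay (decide (σ i ∈ Y)),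
      fun i => isRay_iff_exists_affine.mpr ⟨_, _, _, hε i, rfl⟩, ?_⟩
    have : (fun v => a + A *ᵥ v) = Pi.map (fun i x => a i + ε i * x) ∘ (· ∘ σ) := by
      ext v i
      simp [hmul]
    rw [this, image_comp, stdFace_eq_univ_pi, image_comp_perm_univ_pi, piMap_image_univ_pi]
    rfl
  · rintro ⟨I, hI, rfl⟩
    choose c ε b hε hIeq using fun j => isRay_iff_exists_affine.mp (hI j)
    refine ⟨_, c, Matrix.diagonal ε, Finset.univ.filter (b · = true), ?_, rfl, ?_⟩
    · rw [IsOrthMat, Matrix.diagonal_transpose, Matrix.diagonal_mul_diagonal, ← Matrix.diagonal_one]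
      congr 1
      ext i
      rcases hε i with h | h <;> simp [h]
    · have : (fun v => c + Matrix.diagonal ε *ᵥ v) = Pi.map (fun i x => c i + ε i * x) := by
        ext v i
        simp [Matrix.mulVec_diagonal]
      rw [this, stdFace_eq_univ_pi, piMap_image_univ_pi]
      congr 1
      funext j
      simp [hIeq j]

lemma IsOrthant.isOrthohedral {L : Set (Fin N → ℤ)} (hL : IsOrthant L) : IsOrthohedral L :=
  ⟨{L}, finite_singleton L, by simpa using hL, (sUnion_singleton L).symm⟩

lemma IsOrthohedral.union {S T : Set (Fin N → ℤ)} (hS : IsOrthohedral S) (hT : IsOrthohedral T) :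
    IsOrthohedral (S ∪ T) := by
  obtain ⟨𝓛, h𝓛, h𝓛o, rfl⟩ := hS
  obtain ⟨𝓜, h𝓜, h𝓜o, rfl⟩ := hT
  exact ⟨𝓛 ∪ 𝓜, h𝓛.union h𝓜, fun L hL => hL.elim (h𝓛o L) (h𝓜o L), (sUnion_union 𝓛 𝓜).symm⟩

lemma isOrthohedral_iUnion {ι : Type*} [Finite ι] {S : ι → Set (Fin N → ℤ)}
    (h : ∀ i, IsOrthohedral (S i)) : IsOrthohedral (⋃ i, S i) := by
  choose 𝓛 h𝓛 h𝓛o hS using h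
  refine ⟨⋃ i, 𝓛 i, finite_iUnion h𝓛, fun L hL => ?_, by rw [sUnion_iUnion, iUnion_congr hS]⟩
  obtain ⟨i, hi⟩ := mem_iUnion.mp hL
  exact h𝓛o i L hi

lemma isOrthohedral_biUnion {ι : Type*} {s : Set ι} (hs : s.Finite) {S : ι → Set (Fin N → ℤ)}
    (h : ∀ i ∈ s, IsOrthohedral (S i)) : IsOrthohedral (⋃ i ∈ s, S i) := by
  have := hs.to_subtype
  rw [biUnion_eq_iUnion]
  exact isOrthohedral_iUnion fun i => h i i.2

lemma isOrthohedral_univ_pi {K : Fin N → Set ℤ} (hK : ∀ j, IsRayUnion (K j)) :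
    IsOrthohedral (univ.pi K) := by
  choose F hF hFray hK using hK
  have := fun j => (hF j).to_subtype
  rw [funext hK]
  simp_rw [sUnion_eq_iUnion]
  rw [← iUnion_univ_pi]
  exact isOrthohedral_iUnion fun J =>
    (isOrthant_iff.mpr ⟨_, fun j => hFray j _ (J j).2, rfl⟩).isOrthohedral

lemma isOrthohedral_univ : IsOrthohedral (univ : Set (Fin N → ℤ)) := by
  rw [← pi_univ univ]
  exact isOrthohedral_univ_pi fun _ => isRayUnion_univ

lemma IsOrthant.isOrthohedral_inter {L M : Set (Fin N → ℤ)} (hL : IsOrthant L)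
    (hM : IsOrthant M) : IsOrthohedral (L ∩ M) := by
  obtain ⟨I, hI, rfl⟩ := isOrthant_iff.mp hL
  obtain ⟨I', hI', rfl⟩ := isOrthant_iff.mp hM
  rw [← pi_inter_distrib]
  exact isOrthohedral_univ_pi fun j => (hI j).isRayUnion_inter (hI' j)

lemma IsOrthohedral.inter {S T : Set (Fin N → ℤ)} (hS : IsOrthohedral S) (hT : IsOrthohedral T) :
    IsOrthohedral (S ∩ T) := by
  obtain ⟨𝓛, h𝓛, h𝓛o, rfl⟩ := hS
  obtain ⟨𝓜, h𝓜, h𝓜o, rfl⟩ := hT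
  rw [sUnion_inter_sUnion]
  exact isOrthohedral_biUnion (h𝓛.prod h𝓜) fun p hp => (h𝓛o _ hp.1).isOrthohedral_inter (h𝓜o _ hp.2)

lemma isOrthohedral_biInter {ι : Type*} {s : Set ι} (hs : s.Finite) {S : ι → Set (Fin N → ℤ)}
    (h : ∀ i ∈ s, IsOrthohedral (S i)) : IsOrthohedral (⋂ i ∈ s, S i) := by
  induction s, hs using Set.Finite.induction_on with
  | empty => simpa using isOrthohedral_univ
  | insert _ _ ih =>
    rw [biInter_insert]
    exact (h _ (mem_insert _ _)).inter (ih fun i hi => h i (mem_insert_of_mem _ hi))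

lemma IsOrthant.isOrthohedral_compl {L : Set (Fin N → ℤ)} (hL : IsOrthant L) :
    IsOrthohedral Lᶜ := by
  classical
  obtain ⟨I, hI, rfl⟩ := isOrthant_iff.mp hL
  have : (univ.pi I)ᶜ = ⋃ j, Function.eval j ⁻¹' (I j)ᶜ := by
    ext v
    simp [not_forall]
  rw [this]
  refine isOrthohedral_iUnion fun j => ?_
  rw [eval_preimage]
  refine isOrthohedral_univ_pi fun k => ?_
  rcases eq_or_ne k j with rfl | hk
  · simpa using (hI k).isRayUnion_compl
  · simpa [hk] using isRayUnion_univ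

lemma IsOrthohedral.compl {S : Set (Fin N → ℤ)} (hS : IsOrthohedral S) : IsOrthohedral Sᶜ := by
  obtain ⟨𝓛, h𝓛, h𝓛o, rfl⟩ := hS
  rw [compl_sUnion, sInter_image]
  exact isOrthohedral_biInter h𝓛 fun L hL => (h𝓛o L hL).isOrthohedral_compl

end Orthohedral

/-- Orthohedral subsets of `ℤ^N` are closed under intersections,
unions, and complements. -/
theorem stmt1 {N : ℕ} :
    (∀ S T : Set (Fin N → ℤ), IsOrthohedral S → IsOrthohedral T → IsOrthohedral (S ∩ T)) ∧
    (∀ S T : Set (Fin N → ℤ), IsOrthohedral S → IsOrthohedral T → IsOrthohedral (S ∪ T)) ∧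
    (∀ S : Set (Fin N → ℤ), IsOrthohedral S → IsOrthohedral Sᶜ) :=
  ⟨fun _ _ => IsOrthohedral.inter, fun _ _ => IsOrthohedral.union, fun _ => IsOrthohedral.compl⟩

end PeiPaper
end

section
/- For any orthohedral set S ⊆ ℤ^N, the set of maximal germs of orthants of S is finite; moreover, the set of germs of rank n = rk(S) consists of maximal germs, and its cardinality equals the number of rank-n orthants in any decomposition of S as a finite pairwise disjoint union of orthants (hence this number, the height h(S), is independent of the decomposition). -/
open Pointwise

namespace PeiPaper

-- ====================== auxiliary development ======================

section Aux

variable {N : ℕ}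

/-- Sign vector: every entry is `±1`. -/
def BSigns (ε : Fin N → ℤ) : Prop := ∀ i, ε i = 1 ∨ ε i = -1

/-- Combinatorial normal form of an orthant. -/
def Box (a ε : Fin N → ℤ) (Z : Finset (Fin N)) : Set (Fin N → ℤ) :=
  {x | (∀ i ∉ Z, x i = a i) ∧ ∀ i ∈ Z, 0 ≤ ε i * (x i - a i)}

lemma BSigns.mul_self {ε : Fin N → ℤ} (hε : BSigns ε) (i : Fin N) : ε i * ε i = 1 := by
  rcases hε i with h | h <;> rw [h] <;> ring

lemma BSigns.ne_zero {ε : Fin N → ℤ} (hε : BSigns ε) (i : Fin N) : ε i ≠ 0 := by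
  rcases hε i with h | h <;> rw [h] <;> omega

lemma BSigns.cancel {ε : Fin N → ℤ} (hε : BSigns ε) (i : Fin N) (t : ℤ) :
    ε i * (ε i * t) = t := by rw [← mul_assoc, hε.mul_self, one_mul]

lemma self_mem_box {a ε : Fin N → ℤ} {Z : Finset (Fin N)} : a ∈ Box a ε Z :=
  ⟨fun _ _ => rfl, fun i _ => by simp⟩

lemma box_shift {a c ε : Fin N → ℤ} {Z : Finset (Fin N)} (hc : c ∈ Box a ε Z) :
    Box c ε Z ⊆ Box a ε Z := by
  rintro x ⟨hfix, hpos⟩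
  refine ⟨fun i hi => (hfix i hi).trans (hc.1 i hi), fun i hi => ?_⟩
  have h1 := hpos i hi
  have h2 := hc.2 i hi
  have h3 : ε i * (x i - a i) = ε i * (x i - c i) + ε i * (c i - a i) := by ring
  linarith

lemma box_congr {a ε ε' : Fin N → ℤ} {Z : Finset (Fin N)} (h : ∀ i ∈ Z, ε i = ε' i) :
    Box a ε Z = Box a ε' Z := by
  ext x
  exact ⟨fun ⟨h1, h2⟩ => ⟨h1, fun i hi => (h i hi) ▸ h2 i hi⟩,
    fun ⟨h1, h2⟩ => ⟨h1, fun i hi => (h i hi).symm ▸ h2 i hi⟩⟩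

/-- A box is an orthant of rank `Z.card`. -/
lemma box_orthant {a ε : Fin N → ℤ} {Z : Finset (Fin N)} (hε : BSigns ε) :
    IsOrthantOfRank (Box a ε Z) Z.card := by
  refine ⟨a, Matrix.diagonal ε, Z, ?_, rfl, ?_⟩
  · unfold IsOrthMat
    rw [Matrix.diagonal_transpose, Matrix.diagonal_mul_diagonal,
      show (fun i => ε i * ε i) = fun _ => (1 : ℤ) from funext hε.mul_self, Matrix.diagonal_one]
  · ext x
    constructor
    · rintro ⟨hfix, hpos⟩
      refine ⟨fun i => ε i * (x i - a i), ⟨fun i => ?_, fun i hi => ?_⟩, ?_⟩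
      · show 0 ≤ ε i * (x i - a i)
        by_cases h : i ∈ Z
        · exact hpos i h
        · rw [hfix i h]; simp
      · show ε i * (x i - a i) = 0
        rw [hfix i hi]; simp
      · funext i
        simp only [Pi.add_apply, Matrix.mulVec_diagonal]
        rw [hε.cancel]; ring
    · rintro ⟨v, ⟨hv0, hvz⟩, rfl⟩
      constructor
      · intro i hi
        simp [Matrix.mulVec_diagonal, hvz i hi]
      · intro i hi
        simp only [Pi.add_apply, Matrix.mulVec_diagonal, add_sub_cancel_left]
        rw [hε.cancel]
        exact hv0 i

lemma sum_mul_self_eq_one {α : Type*} [Fintype α] {f : α → ℤ} (h : ∑ a, f a * f a = 1) :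
    ∃ a, (f a = 1 ∨ f a = -1) ∧ ∀ b, b ≠ a → f b = 0 := by
  classical
  have hex : ∃ a, f a ≠ 0 := by
    by_contra hc
    push_neg at hc
    simp [hc] at h
  obtain ⟨a, ha⟩ := hex
  have h1 : 1 ≤ f a * f a := by
    have : f a ≤ -1 ∨ 1 ≤ f a := by omega
    rcases this with h' | h' <;> nlinarith
  have hsplit : f a * f a + ∑ b ∈ Finset.univ.erase a, f b * f b = 1 := by
    rw [← h]; exact Finset.add_sum_erase _ (fun b => f b * f b) (Finset.mem_univ a)
  have hrest : 0 ≤ ∑ b ∈ Finset.univ.erase a, f b * f b :=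
    Finset.sum_nonneg fun b _ => mul_self_nonneg _
  have haa : f a * f a = 1 := le_antisymm (by linarith) h1
  refine ⟨a, mul_self_eq_one_iff.1 haa, fun b hb => ?_⟩
  have hz : ∑ b ∈ Finset.univ.erase a, f b * f b = 0 := by linarith
  have := (Finset.sum_eq_zero_iff_of_nonneg fun b _ => mul_self_nonneg (f b)).1 hz b
    (Finset.mem_erase.2 ⟨hb, Finset.mem_univ b⟩)
  exact mul_self_eq_zero.1 this

/-- Every orthant is a box. -/
lemma orthant_box {L : Set (Fin N → ℤ)} {k : ℕ} (h : IsOrthantOfRank L k) :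
    ∃ a ε Z, BSigns ε ∧ Z.card = k ∧ L = Box a ε Z := by
  classical
  obtain ⟨a, A, Y, hA, hY, rfl⟩ := h
  have hent : ∀ i i', ∑ j, A i j * A i' j = (1 : Matrix (Fin N) (Fin N) ℤ) i i' := by
    intro i i'
    rw [← hA, Matrix.mul_apply]
    simp only [Matrix.transpose_apply]
  have hrow : ∀ i, ∃ j, (A i j = 1 ∨ A i j = -1) ∧ ∀ j', j' ≠ j → A i j' = 0 := by
    intro i
    apply sum_mul_self_eq_one
    rw [hent i i, Matrix.one_apply_eq]
  set π : Fin N → Fin N := fun i => (hrow i).choose with hπ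
  have hπ1 : ∀ i, A i (π i) = 1 ∨ A i (π i) = -1 := fun i => (hrow i).choose_spec.1
  have hπ0 : ∀ i j, j ≠ π i → A i j = 0 := fun i => (hrow i).choose_spec.2
  set ε : Fin N → ℤ := fun i => A i (π i) with hε'
  have hε : BSigns ε := hπ1
  have hsum : ∀ (i : Fin N) (g : Fin N → ℤ), ∑ j, A i j * g j = A i (π i) * g (π i) := by
    intro i g
    exact Finset.sum_eq_single_of_mem (π i) (Finset.mem_univ _)
      (fun j _ hj => by rw [hπ0 i j hj, zero_mul])
  have hmv : ∀ (v : Fin N → ℤ) i, A.mulVec v i = ε i * v (π i) := by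
    intro v i
    rw [Matrix.mulVec, dotProduct, hsum]
  have hinj : Function.Injective π := by
    intro i i' hii
    by_contra hne
    have h0 : ∑ j, A i j * A i' j = 0 := by
      rw [hent i i', Matrix.one_apply_ne hne]
    rw [hsum] at h0
    rw [hii] at h0
    exact (mul_ne_zero (by rw [← hii]; exact hε.ne_zero i) (hε.ne_zero i')) h0
  have hbij : Function.Bijective π := Finite.injective_iff_bijective.1 hinj
  set e : Fin N ≃ Fin N := Equiv.ofBijective π hbij with he
  have hee : ∀ i, e i = π i := fun i => rfl
  have hsymm : ∀ i, e.symm (π i) = i := by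
    intro i
    rw [← hee]
    exact e.symm_apply_apply i
  have happ : ∀ j, π (e.symm j) = j := by
    intro j
    rw [← hee]
    exact e.apply_symm_apply j
  refine ⟨a, ε, Finset.univ.filter (fun i => π i ∈ Y), hε, ?_, ?_⟩
  · rw [← hY]
    refine Finset.card_bij (fun i _ => π i) ?_ ?_ ?_
    · intro i hi
      exact (Finset.mem_filter.1 hi).2
    · intro i hi i' hi' h
      exact hinj h
    · intro y hy
      refine ⟨e.symm y, Finset.mem_filter.2 ⟨Finset.mem_univ _, ?_⟩, happ y⟩
      rw [happ y]; exact hy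
  · ext x
    constructor
    · rintro ⟨v, ⟨hv0, hvY⟩, rfl⟩
      constructor
      · intro i hi
        have hYn : π i ∉ Y := fun hm => hi (Finset.mem_filter.2 ⟨Finset.mem_univ _, hm⟩)
        simp [hmv, hvY _ hYn]
      · intro i _
        simp only [Pi.add_apply, hmv, add_sub_cancel_left]
        rw [hε.cancel]
        exact hv0 _
    · rintro ⟨hfix, hpos⟩
      refine ⟨fun j => ε (e.symm j) * (x (e.symm j) - a (e.symm j)), ⟨?_, ?_⟩, ?_⟩
      · intro j
        show 0 ≤ ε (e.symm j) * (x (e.symm j) - a (e.symm j))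
        by_cases h : e.symm j ∈ Finset.univ.filter (fun i => π i ∈ Y)
        · exact hpos _ h
        · rw [hfix _ h]; simp
      · intro j hj
        show ε (e.symm j) * (x (e.symm j) - a (e.symm j)) = 0
        have h : e.symm j ∉ Finset.univ.filter (fun i => π i ∈ Y) := by
          intro hc
          rw [Finset.mem_filter, happ j] at hc
          exact hj hc.2
        rw [hfix _ h]; simp
      · funext i
        simp only [Pi.add_apply, hmv, hsymm i]
        rw [hε.cancel]; ring


/-- Sub-box rigidity: a box contained in another box has larger-box-compatible data. -/
lemma box_subset_box {a a' ε ε' : Fin N → ℤ} {Z Z' : Finset (Fin N)}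
    (hε : BSigns ε) (hε' : BSigns ε')
    (hsub : Box a' ε' Z' ⊆ Box a ε Z) :
    Z' ⊆ Z ∧ (∀ i ∈ Z', ε' i = ε i) ∧ (∀ i ∉ Z, a' i = a i) := by
  classical
  have hmem : ∀ t : ℤ, 0 ≤ t → ∀ i ∈ Z',
      Function.update a' i (a' i + ε' i * t) ∈ Box a' ε' Z' := by
    intro t ht i hi
    constructor
    · intro j hj
      rw [Function.update_of_ne (fun hji : j = i => hj (hji ▸ hi))]
    · intro j hj
      rcases eq_or_ne j i with rfl | hne
      · rw [Function.update_self, add_sub_cancel_left, hε'.cancel]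
        exact ht
      · rw [Function.update_of_ne hne]
        simp
  have ha' : a' ∈ Box a ε Z := hsub self_mem_box
  have hZ : Z' ⊆ Z := by
    intro i hi
    by_contra hiZ
    have h1 := (hsub (hmem 1 one_pos.le i hi)).1 i hiZ
    rw [Function.update_self, mul_one] at h1
    have h2 := ha'.1 i hiZ
    rcases hε' i with h | h <;> rw [h] at h1 <;> omega
  refine ⟨hZ, ?_, fun i hiZ => ha'.1 i hiZ⟩
  intro i hi
  by_contra hne
  have hprod : ε i * ε' i = -1 := by
    rcases hε i with h | h <;> rcases hε' i with h' | h'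
    · exact absurd (h'.trans h.symm) hne
    · rw [h, h']; norm_num
    · rw [h, h']; norm_num
    · exact absurd (h'.trans h.symm) hne
  have hbase : 0 ≤ ε i * (a' i - a i) := ha'.2 i (hZ hi)
  set t : ℤ := ε i * (a' i - a i) + 1 with htdef
  have ht0 : 0 ≤ t := by omega
  have h1 := (hsub (hmem t ht0 i hi)).2 i (hZ hi)
  rw [Function.update_self] at h1
  have hcalc : ε i * (a' i + ε' i * t - a i) = ε i * (a' i - a i) + (ε i * ε' i) * t := by ring
  rw [hcalc, hprod] at h1
  omega

lemma rank_le_of_subset_box {L : Set (Fin N → ℤ)} {k : ℕ} {a ε : Fin N → ℤ}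
    {Z : Finset (Fin N)} (hε : BSigns ε)
    (hL : IsOrthantOfRank L k) (hsub : L ⊆ Box a ε Z) : k ≤ Z.card := by
  obtain ⟨a', ε', Z', hε', hcard, rfl⟩ := orthant_box hL
  have h := (box_subset_box hε hε' hsub).1
  calc k = Z'.card := hcard.symm
  _ ≤ Z.card := Finset.card_le_card h

lemma rank_le_N {L : Set (Fin N → ℤ)} {k : ℕ} (h : IsOrthantOfRank L k) : k ≤ N := by
  obtain ⟨a, A, Y, _, hY, _⟩ := h
  have := Finset.card_le_univ Y
  simp only [Finset.card_univ, Fintype.card_fin] at this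
  omega

lemma bddAbove_ranks (T : Set (Fin N → ℤ)) :
    BddAbove {k | ∃ L, IsOrthantOfRank L k ∧ L ⊆ T} :=
  ⟨N, fun _ ⟨_, hL, _⟩ => rank_le_N hL⟩

lemma rank_le_orthRank {T L : Set (Fin N → ℤ)} {k : ℕ}
    (hL : IsOrthantOfRank L k) (hsub : L ⊆ T) : k ≤ orthRank T :=
  le_csSup (bddAbove_ranks T) ⟨L, hL, hsub⟩

lemma orthRank_le {T : Set (Fin N → ℤ)} {m : ℕ}
    (h : ∀ k L, IsOrthantOfRank L k → L ⊆ T → k ≤ m) : orthRank T ≤ m := by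
  unfold orthRank
  rcases Set.eq_empty_or_nonempty {k | ∃ L, IsOrthantOfRank L k ∧ L ⊆ T} with he | hne
  · rw [he, csSup_empty]
    exact Nat.zero_le m
  · exact csSup_le hne (fun k ⟨L, hL, hs⟩ => h k L hL hs)

lemma orthRank_box {a ε : Fin N → ℤ} {Z : Finset (Fin N)} (hε : BSigns ε) :
    orthRank (Box a ε Z) = Z.card :=
  le_antisymm (orthRank_le fun _ _ hL hs => rank_le_of_subset_box hε hL hs)
    (rank_le_orthRank (box_orthant hε) subset_rfl)

lemma rank_unique {L : Set (Fin N → ℤ)} {k : ℕ} (h : IsOrthantOfRank L k) :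
    orthRank L = k := by
  obtain ⟨a, ε, Z, hε, hc, rfl⟩ := orthant_box h
  rw [orthRank_box hε]
  exact hc

lemma singleton_orthant (x : Fin N → ℤ) : IsOrthantOfRank {x} 0 := by
  have h : Box x (fun _ => 1) (∅ : Finset (Fin N)) = {x} := by
    ext y
    constructor
    · rintro ⟨h1, _⟩
      exact funext fun i => h1 i (by simp)
    · rintro rfl
      exact ⟨fun _ _ => rfl, fun i hi => absurd hi (by simp)⟩
  have := box_orthant (a := x) (Z := (∅ : Finset (Fin N))) (fun _ => Or.inl rfl)
  rwa [h, Finset.card_empty] at this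

lemma exists_orthant_orthRank {T : Set (Fin N → ℤ)} (hT : T.Nonempty) :
    ∃ L, IsOrthantOfRank L (orthRank T) ∧ L ⊆ T := by
  have hne : {k | ∃ L, IsOrthantOfRank L k ∧ L ⊆ T}.Nonempty := by
    obtain ⟨x, hx⟩ := hT
    exact ⟨0, {x}, singleton_orthant x, by simpa using hx⟩
  exact Nat.sSup_mem hne (bddAbove_ranks T)

/-- Builder: two boxes with the same directions and compatible bases are commensurable. -/
lemma commensurable_boxes {a a' ε ε' : Fin N → ℤ} {Z : Finset (Fin N)}
    (hε : BSigns ε) (hε' : BSigns ε') (hagree : ∀ i ∈ Z, ε i = ε' i)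
    (hbase : ∀ i ∉ Z, a i = a' i) :
    Commensurable (Box a ε Z) (Box a' ε' Z) := by
  classical
  set d : Fin N → ℤ := fun i => if ε i = 1 then max (a i) (a' i) else min (a i) (a' i) with hd
  have hd1 : d ∈ Box a ε Z := by
    constructor
    · intro i hi
      show (if ε i = 1 then max (a i) (a' i) else min (a i) (a' i)) = a i
      rw [← hbase i hi]
      split <;> simp
    · intro i hi
      show 0 ≤ ε i * ((if ε i = 1 then max (a i) (a' i) else min (a i) (a' i)) - a i)
      rcases hε i with h | h
      · rw [h, if_pos rfl, one_mul]
        have := le_max_left (a i) (a' i)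
        omega
      · rw [h, if_neg (by omega)]
        have := min_le_left (a i) (a' i)
        omega
  have hd2 : d ∈ Box a' ε' Z := by
    constructor
    · intro i hi
      show (if ε i = 1 then max (a i) (a' i) else min (a i) (a' i)) = a' i
      rw [hbase i hi]
      split <;> simp
    · intro i hi
      show 0 ≤ ε' i * ((if ε i = 1 then max (a i) (a' i) else min (a i) (a' i)) - a' i)
      rw [← hagree i hi]
      rcases hε i with h | h
      · rw [h, if_pos rfl, one_mul]
        have := le_max_right (a i) (a' i)
        omega
      · rw [h, if_neg (by omega)]
        have := min_le_right (a i) (a' i)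
        omega
  have hsub1 : Box d ε Z ⊆ Box a ε Z := box_shift hd1
  have hsub2 : Box d ε Z ⊆ Box a' ε' Z := by
    rw [box_congr hagree]
    exact box_shift hd2
  have hrk : orthRank (Box a ε Z ∩ Box a' ε' Z) = Z.card :=
    le_antisymm
      (orthRank_le fun _ _ hK hs =>
        rank_le_of_subset_box hε hK (hs.trans Set.inter_subset_left))
      (rank_le_orthRank (box_orthant hε) (Set.subset_inter hsub1 hsub2))
  exact ⟨⟨d, hsub1 self_mem_box, hsub2 self_mem_box⟩,
    by rw [orthRank_box hε, hrk], by rw [orthRank_box hε', hrk]⟩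

/-- Structure: commensurable boxes of the same rank have the same data. -/
lemma commensurable_structure {a a' ε ε' : Fin N → ℤ} {Z Z' : Finset (Fin N)}
    (hε : BSigns ε) (hε' : BSigns ε') (hcard : Z'.card = Z.card)
    (hcomm : Commensurable (Box a ε Z) (Box a' ε' Z')) :
    Z' = Z ∧ (∀ i ∈ Z, ε i = ε' i) ∧ (∀ i ∉ Z, a i = a' i) := by
  obtain ⟨hne, h1, h2⟩ := hcomm
  have hrk : orthRank (Box a ε Z ∩ Box a' ε' Z') = Z.card := by
    rw [← h1, orthRank_box hε]
  obtain ⟨K, hK, hKsub⟩ := exists_orthant_orthRank hne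
  rw [hrk] at hK
  obtain ⟨c, δ, W, hδ, hWcard, rfl⟩ := orthant_box hK
  have hA := box_subset_box hε hδ (hKsub.trans Set.inter_subset_left)
  have hB := box_subset_box hε' hδ (hKsub.trans Set.inter_subset_right)
  have hWZ : W = Z := Finset.eq_of_subset_of_card_le hA.1 (by omega)
  have hWZ' : W = Z' := Finset.eq_of_subset_of_card_le hB.1 (by omega)
  subst hWZ
  refine ⟨hWZ'.symm, fun i hi => ?_, fun i hiW => ?_⟩
  · rw [← hA.2.1 i hi, hB.2.1 i hi]
  · rw [← hA.2.2 i hiW, hB.2.2 i (hWZ' ▸ hiW)]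


/-- The diagonal ray of a box. -/
noncomputable def bray (a ε : Fin N → ℤ) (Z : Finset (Fin N)) (t : ℤ) : Fin N → ℤ :=
  fun i => if i ∈ Z then a i + ε i * t else a i

lemma bray_mem_box {a ε : Fin N → ℤ} {Z : Finset (Fin N)} (hε : BSigns ε)
    {t : ℤ} (ht : 0 ≤ t) : bray a ε Z t ∈ Box a ε Z := by
  constructor
  · intro i hi
    show (if i ∈ Z then a i + ε i * t else a i) = a i
    rw [if_neg hi]
  · intro i hi
    show 0 ≤ ε i * ((if i ∈ Z then a i + ε i * t else a i) - a i)
    rw [if_pos hi, add_sub_cancel_left, hε.cancel]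
    exact ht

/-- Key covering lemma: a rank-`Z.card` box inside a finite union of orthants meets one
of them along a full sub-box. -/
lemma escape {𝓛 : Set (Set (Fin N → ℤ))} (hfin : 𝓛.Finite)
    (horth : ∀ L ∈ 𝓛, IsOrthant L) {a ε : Fin N → ℤ} {Z : Finset (Fin N)}
    (hε : BSigns ε) (hsub : Box a ε Z ⊆ ⋃₀ 𝓛) :
    ∃ L ∈ 𝓛, ∃ b δ W, BSigns δ ∧ L = Box b δ W ∧ Z ⊆ W ∧ (∀ i ∈ Z, δ i = ε i) ∧
      ∃ c, c ∈ Box a ε Z ∧ c ∈ L ∧ Box c ε Z ⊆ Box a ε Z ∩ L := by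
  classical
  have hcov : Set.Ici (0 : ℤ) ⊆ ⋃ L ∈ 𝓛, {t : ℤ | 0 ≤ t ∧ bray a ε Z t ∈ L} := by
    intro t ht
    obtain ⟨L, hL, hxt⟩ := hsub (bray_mem_box hε ht)
    exact Set.mem_biUnion hL ⟨ht, hxt⟩
  have hinf : ∃ L ∈ 𝓛, {t : ℤ | 0 ≤ t ∧ bray a ε Z t ∈ L}.Infinite := by
    by_contra hcon
    push_neg at hcon
    exact (Set.Ici_infinite 0) ((Set.Finite.biUnion hfin hcon).subset hcov)
  obtain ⟨L, hL𝓛, hTinf⟩ := hinf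
  set T := {t : ℤ | 0 ≤ t ∧ bray a ε Z t ∈ L} with hT
  have hgt : ∀ m : ℤ, ∃ t ∈ T, m < t := by
    intro m
    by_contra hc
    push_neg at hc
    exact hTinf ((Set.finite_Icc 0 m).subset (fun t ht => ⟨ht.1, hc t ht⟩))
  obtain ⟨k0, hk0rank⟩ := horth L hL𝓛
  obtain ⟨b, δ, W, hδ, hWc, hLbox⟩ := orthant_box hk0rank
  obtain ⟨t0, ht0T⟩ := hTinf.nonempty
  have hbrayi : ∀ (t : ℤ), ∀ i ∈ Z, bray a ε Z t i = a i + ε i * t := by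
    intro t i hi
    show (if i ∈ Z then a i + ε i * t else a i) = _
    rw [if_pos hi]
  have hZW : Z ⊆ W := by
    intro i hi
    by_contra hiW
    obtain ⟨t1, ht1T, ht1gt⟩ := hgt t0
    have e0 : bray a ε Z t0 i = b i := by
      have hm := ht0T.2
      rw [hLbox] at hm
      exact hm.1 i hiW
    have e1 : bray a ε Z t1 i = b i := by
      have hm := ht1T.2
      rw [hLbox] at hm
      exact hm.1 i hiW
    rw [hbrayi t0 i hi] at e0
    rw [hbrayi t1 i hi] at e1
    have hc : ε i * t0 = ε i * t1 := by omega
    have := mul_left_cancel₀ (hε.ne_zero i) hc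
    omega
  have hδε : ∀ i ∈ Z, δ i = ε i := by
    intro i hi
    by_cases heq : δ i = ε i
    · exact heq
    have hprod : δ i * ε i = -1 := by
      rcases hδ i with h | h <;> rcases hε i with h' | h'
      · exact absurd (h.trans h'.symm) heq
      · rw [h, h']; norm_num
      · rw [h, h']; norm_num
      · exact absurd (h.trans h'.symm) heq
    obtain ⟨t1, ht1T, ht1gt⟩ := hgt (δ i * (a i - b i))
    have hmem := ht1T.2
    rw [hLbox] at hmem
    have h0 := hmem.2 i (hZW hi)
    rw [hbrayi t1 i hi] at h0
    have hcalc : δ i * (a i + ε i * t1 - b i) = δ i * (a i - b i) + (δ i * ε i) * t1 := by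
      ring
    rw [hcalc, hprod] at h0
    omega
  refine ⟨L, hL𝓛, b, δ, W, hδ, hLbox, hZW, hδε, bray a ε Z t0,
    bray_mem_box hε ht0T.1, ht0T.2, ?_⟩
  intro y hy
  refine ⟨box_shift (bray_mem_box hε ht0T.1) hy, ?_⟩
  rw [hLbox]
  have hc0 := ht0T.2
  rw [hLbox] at hc0
  constructor
  · intro i hiW
    have hiZ : i ∉ Z := fun h => hiW (hZW h)
    rw [hy.1 i hiZ]
    exact hc0.1 i hiW
  · intro i hiW
    by_cases hiZ : i ∈ Z
    · have h1 := hy.2 i hiZ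
      have h2 := hc0.2 i hiW
      have h3 : δ i * (y i - b i) =
          δ i * (y i - bray a ε Z t0 i) + δ i * (bray a ε Z t0 i - b i) := by ring
      have h4 : δ i * (y i - bray a ε Z t0 i) = ε i * (y i - bray a ε Z t0 i) := by
        rw [hδε i hiZ]
      linarith
    · rw [hy.1 i hiZ]
      exact hc0.2 i hiW

lemma comm_refl {L : Set (Fin N → ℤ)} {k : ℕ} (h : IsOrthantOfRank L k) :
    Commensurable L L := by
  obtain ⟨a, ε, Z, hε, _, rfl⟩ := orthant_box h
  exact commensurable_boxes hε hε (fun _ _ => rfl) (fun _ _ => rfl)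

lemma comm_symm {L L' : Set (Fin N → ℤ)} (h : Commensurable L L') :
    Commensurable L' L := by
  obtain ⟨h1, h2, h3⟩ := h
  exact ⟨by rwa [Set.inter_comm], by rwa [Set.inter_comm], by rwa [Set.inter_comm]⟩

lemma comm_trans {A B C : Set (Fin N → ℤ)} {k : ℕ} (hA : IsOrthantOfRank A k)
    (hB : IsOrthantOfRank B k) (hC : IsOrthantOfRank C k)
    (h1 : Commensurable A B) (h2 : Commensurable B C) : Commensurable A C := by
  obtain ⟨a, εa, Za, hεa, hca, rfl⟩ := orthant_box hA
  obtain ⟨b, εb, Zb, hεb, hcb, rfl⟩ := orthant_box hB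
  obtain ⟨c, εc, Zc, hεc, hcc, rfl⟩ := orthant_box hC
  obtain ⟨hZba, hab, hba⟩ := commensurable_structure hεa hεb (by omega) h1
  obtain ⟨hZcb, hbc, hcb'⟩ := commensurable_structure hεb hεc (by omega) h2
  have hZca : Zc = Za := hZcb.trans hZba
  rw [hZca]
  refine commensurable_boxes hεa hεc ?_ ?_
  · intro i hi
    rw [hab i hi, hbc i (by rwa [hZba])]
  · intro i hi
    rw [hba i hi, hcb' i (by rwa [hZba])]

lemma germ_rel_equiv (S : Set (Fin N → ℤ)) (k : ℕ) :
    Equivalence (fun L L' : germSet S k => Commensurable L.1 L'.1) where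
  refl L := comm_refl L.2.1
  symm h := comm_symm h
  trans {A B C} h1 h2 := comm_trans A.2.1 B.2.1 C.2.1 h1 h2

end Aux

/-- For an orthohedral set `S`, the set of maximal germs is finite, the
rank-`rk S` germs are maximal, and their number equals the number of rank-`rk S` orthants
in any finite pairwise disjoint decomposition of `S` into orthants. -/
theorem stmt2 {N : ℕ} (S : Set (Fin N → ℤ)) (hS : IsOrthohedral S) :
    {p : Σ k, Germ S k | IsMaxGerm S p}.Finite ∧
    (∀ γ : Germ S (orthRank S), IsMaxGerm S ⟨orthRank S, γ⟩) ∧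
    (∀ 𝓛 : Set (Set (Fin N → ℤ)), 𝓛.Finite → (∀ L ∈ 𝓛, IsOrthant L) →
      𝓛.PairwiseDisjoint id → S = ⋃₀ 𝓛 →
      Nat.card (Germ S (orthRank S)) = {L ∈ 𝓛 | IsOrthantOfRank L (orthRank S)}.ncard) := by
  classical
  obtain ⟨𝓛₀, h𝓛₀fin, h𝓛₀orth, hS0⟩ := hS
  refine ⟨?_, ?_, ?_⟩
  · -- finiteness of maximal germs
    have hcover : {p : Σ k, Germ S k | IsMaxGerm S p} ⊆
        ⋃ L ∈ 𝓛₀, {p : Σ k, Germ S k |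
          ∃ h : L ∈ germSet S p.1, p.2 = germOf S p.1 ⟨L, h⟩} := by
      rintro ⟨k, γ⟩ hmax
      obtain ⟨M, hMrep⟩ := Quot.exists_rep γ
      obtain ⟨a, ε, Z, hε, hZcard, hMbox⟩ := orthant_box M.2.1
      have hZk : Z.card = k := hZcard
      have hMsub : Box a ε Z ⊆ ⋃₀ 𝓛₀ := by
        rw [← hMbox, ← hS0]
        exact M.2.2
      obtain ⟨L, hL𝓛, b, δ, W, hδ, hLbox, hZW, hδε, c, hcM, hcL, hcsub⟩ :=
        escape h𝓛₀fin h𝓛₀orth hε hMsub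
      have hLS : L ⊆ S := by
        rw [hS0]
        exact Set.subset_sUnion_of_mem hL𝓛
      have hLg : L ∈ germSet S W.card := ⟨hLbox ▸ box_orthant hδ, hLS⟩
      have hKg : Box c ε Z ∈ germSet S k :=
        ⟨hZcard ▸ box_orthant hε,
          (hcsub.trans Set.inter_subset_left).trans (hMbox ▸ M.2.2)⟩
      have hMK : Commensurable M.1 (Box c ε Z) := by
        rw [hMbox]
        exact commensurable_boxes hε hε (fun _ _ => rfl) (fun i hi => (hcM.1 i hi).symm)
      have hgermK : germOf S k ⟨Box c ε Z, hKg⟩ = γ := by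
        rw [← hMrep]
        exact Quot.sound (comm_symm hMK)
      have hle : germLE S ⟨k, γ⟩ ⟨W.card, germOf S W.card ⟨L, hLg⟩⟩ :=
        ⟨⟨Box c ε Z, hKg⟩, ⟨L, hLg⟩, hgermK, rfl,
          fun x hx => ((hcsub hx).2 : x ∈ L)⟩
      obtain ⟨P, Q, hP, hQ, hPQ⟩ := hmax _ hle
      have hWk : W.card ≤ k := by
        obtain ⟨aq, εq, Zq, hεq, hZqcard, hQbox⟩ := orthant_box Q.2.1
        have hZqk : Zq.card = k := hZqcard
        have h5 : W.card ≤ Zq.card := rank_le_of_subset_box hεq P.2.1 (hQbox ▸ hPQ)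
        omega
      have hkW : k ≤ W.card := by
        have := Finset.card_le_card hZW
        omega
      have hkeq : k = W.card := le_antisymm hkW hWk
      have hZWeq : Z = W := Finset.eq_of_subset_of_card_le hZW (by omega)
      have hcL' : c ∈ Box b δ W := hLbox ▸ hcL
      have hML : Commensurable M.1 L := by
        rw [hMbox, hLbox, ← hZWeq]
        refine commensurable_boxes hε hδ (fun i hi => (hδε i hi).symm) ?_
        intro i hi
        rw [← hcM.1 i hi, hcL'.1 i (by rwa [← hZWeq])]
      refine Set.mem_iUnion₂.2 ⟨L, hL𝓛, ?_⟩
      have hLgk : L ∈ germSet S k := by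
        rw [hkeq]
        exact hLg
      refine ⟨hLgk, ?_⟩
      show γ = germOf S k ⟨L, hLgk⟩
      rw [← hMrep]
      exact Quot.sound hML
    refine Set.Finite.subset (Set.Finite.biUnion h𝓛₀fin (fun L _ => ?_)) hcover
    apply Set.Subsingleton.finite
    rintro ⟨k, γ⟩ ⟨h1, hγ⟩ ⟨k', γ'⟩ ⟨h1', hγ'⟩
    have hkk : k = k' := (rank_unique h1.1).symm.trans (rank_unique h1'.1)
    subst hkk
    have a1 : γ = germOf S k ⟨L, h1⟩ := hγ
    have a2 : γ' = germOf S k ⟨L, h1'⟩ := hγ'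
    have hgg : γ = γ' := a1.trans a2.symm
    rw [hgg]
  · -- maximality of top-rank germs
    rintro γ ⟨k, γ'⟩ hq
    obtain ⟨L, L', hLrep, hL'rep, hsub⟩ := hq
    obtain ⟨a, ε, Z, hε, hZc, hLbox⟩ := orthant_box L.2.1
    obtain ⟨b, δ, W, hδ, hWc, hL'box⟩ := orthant_box L'.2.1
    have hZcn : Z.card = orthRank S := hZc
    have hWck : W.card = k := hWc
    have hk_le : k ≤ orthRank S := rank_le_orthRank L'.2.1 L'.2.2
    have hsub' : Box a ε Z ⊆ Box b δ W := hLbox ▸ hL'box ▸ hsub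
    have hstr := box_subset_box hδ hε hsub'
    have hn_le : orthRank S ≤ k := by
      have := Finset.card_le_card hstr.1
      omega
    have hkn : k = orthRank S := le_antisymm hk_le hn_le
    subst hkn
    have hZW : Z = W := Finset.eq_of_subset_of_card_le hstr.1 (by omega)
    have hcomm : Commensurable L.1 L'.1 := by
      rw [hLbox, hL'box, ← hZW]
      exact commensurable_boxes hε hδ (fun i hi => hstr.2.1 i hi)
        (fun i hi => hstr.2.2 i (by rw [← hZW]; exact hi))
    have hL'rep' : germOf S (orthRank S) L' = γ' := hL'rep
    have hLrep' : germOf S (orthRank S) L = γ := hLrep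
    exact ⟨L, L, by rw [← hL'rep']; exact Quot.sound hcomm, hLrep', subset_rfl⟩
  · -- counting
    intro 𝓛 hfin horth hdisj hU
    have hmem : ∀ L, L ∈ 𝓛 → IsOrthantOfRank L (orthRank S) →
        L ∈ germSet S (orthRank S) := by
      intro L h h2
      exact ⟨h2, by rw [hU]; exact Set.subset_sUnion_of_mem h⟩
    let φ : {L : Set (Fin N → ℤ) // L ∈ 𝓛 ∧ IsOrthantOfRank L (orthRank S)} →
        Germ S (orthRank S) :=
      fun L => germOf S (orthRank S) ⟨L.1, hmem L.1 L.2.1 L.2.2⟩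
    have hinj : Function.Injective φ := by
      intro L L' h
      have hcc : Commensurable L.1 L'.1 :=
        (germ_rel_equiv S (orthRank S)).eqvGen_iff.1 (Quot.eqvGen_exact h)
      by_contra hne
      have hne1 : L.1 ≠ L'.1 := fun hv => hne (Subtype.ext hv)
      have hd := hdisj L.2.1 L'.2.1 hne1
      rw [Function.onFun, Set.disjoint_iff_inter_eq_empty] at hd
      obtain ⟨x, hx⟩ := hcc.1
      rw [show (id L.1 : Set (Fin N → ℤ)) = L.1 from rfl,
        show (id L'.1 : Set (Fin N → ℤ)) = L'.1 from rfl] at hd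
      rw [hd] at hx
      exact hx
    have hsurj : Function.Surjective φ := by
      intro γ
      obtain ⟨M, rfl⟩ := Quot.exists_rep γ
      obtain ⟨a, ε, Z, hε, hZc, hMbox⟩ := orthant_box M.2.1
      have hMsub : Box a ε Z ⊆ ⋃₀ 𝓛 := by
        rw [← hMbox, ← hU]
        exact M.2.2
      obtain ⟨L, hL𝓛, b, δ, W, hδ, hLbox, hZW, hδε, c, hcM, hcL, hcsub⟩ :=
        escape hfin horth hε hMsub
      have hWn : W.card ≤ orthRank S :=
        rank_le_orthRank (hLbox ▸ box_orthant hδ)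
          (by rw [hU]; exact Set.subset_sUnion_of_mem hL𝓛)
      have hnW : orthRank S ≤ W.card := by
        have := Finset.card_le_card hZW
        omega
      have hZWeq : Z = W := Finset.eq_of_subset_of_card_le hZW (by omega)
      have hLrank : IsOrthantOfRank L (orthRank S) := by
        rw [hLbox, show orthRank S = W.card by omega]
        exact box_orthant hδ
      have hcL' : c ∈ Box b δ W := hLbox ▸ hcL
      have hcomm : Commensurable L M.1 := by
        rw [hLbox, hMbox, ← hZWeq]
        refine commensurable_boxes hδ hε hδε ?_
        intro i hi
        rw [← hcM.1 i hi, hcL'.1 i (by rwa [← hZWeq])]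
      exact ⟨⟨L, hL𝓛, hLrank⟩, Quot.sound hcomm⟩
    rw [← Nat.card_coe_set_eq]
    exact (Nat.card_eq_of_bijective φ ⟨hinj, hsurj⟩).symm


end PeiPaper
end
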